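/- For every ε ∈ ℝ and j ∈ {1,2}, the pull-back of the Toda lattice flow under the Miura map M_j(ε) coincides with the modified Toda lattice MTL(ε): for every point (q,p) ∈ ℳ𝒯, DM_j(ε)(q,p)·F_{MTL(ε)}(q,p) = f_{TL}(M_j(ε)(q,p)), where F_{MTL(ε)} is the MTL(ε) vector field and f_{TL} is the Toda lattice vector field. -/

import Mathlib

open scoped BigOperators

/-- Index set for the periodic phase space `ℝ^{2N}`: `Sum.inl k` indexes the first
family of coordinates and `Sum.inr k` the second family, `k ∈ ℤ/Nℤ`. -/
abbrev Idx (N : ℕ) : Type := (ZMod N) ⊕ (ZMod N)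

/-- The phase space `ℝ^{2N}`. -/
abbrev Phase (N : ℕ) : Type := Idx N → ℝ

/-- First family of coordinates. -/
def c1 {N : ℕ} (x : Phase N) (k : ZMod N) : ℝ := x (Sum.inl k)

/-- Second family of coordinates. -/
def c2 {N : ℕ} (x : Phase N) (k : ZMod N) : ℝ := x (Sum.inr k)

/-- A structure matrix on `Phase N`. -/
abbrev SM (N : ℕ) : Type := Phase N → Idx N → Idx N → ℝ

/-- Partial derivative of `F` at `x` in the `i`-th coordinate direction. -/
noncomputable def pderiv {N : ℕ} [NeZero N] (i : Idx N) (F : Phase N → ℝ)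
    (x : Phase N) : ℝ :=
  fderiv ℝ F x (Pi.single i 1)

/-- The bracket of two functions associated with a structure matrix `J`:
`{F,G}(x) = ∑_{i,j} ∂_i F(x) · J_{ij}(x) · ∂_j G(x)`. -/
noncomputable def bracket {N : ℕ} [NeZero N] (J : SM N) (F G : Phase N → ℝ)
    (x : Phase N) : ℝ :=
  ∑ i : Idx N, ∑ j : Idx N, pderiv i F x * J x i j * pderiv j G x

/-- The Jacobi identity for `J` holds at every point satisfying `P`. -/
def JacobiOn {N : ℕ} [NeZero N] (J : SM N) (P : Phase N → Prop) : Prop :=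
  ∀ F G H : Phase N → ℝ, ContDiff ℝ (⊤ : ℕ∞) F → ContDiff ℝ (⊤ : ℕ∞) G →
    ContDiff ℝ (⊤ : ℕ∞) H → ∀ x : Phase N, P x →
      bracket J (bracket J F G) H x + bracket J (bracket J G H) F x +
        bracket J (bracket J H F) G x = 0

/-- `J` defines a Poisson bracket: the Jacobi identity holds everywhere. -/
def IsPoisson {N : ℕ} [NeZero N] (J : SM N) : Prop :=
  JacobiOn J fun _ => True

/-- `f(x) = J(x)∇H(x)`: the vector field `f` is Hamiltonian at `x` with respect
to the structure matrix `J`, with Hamilton function `H`. -/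
def HamAt {N : ℕ} [NeZero N] (J : SM N) (f : Phase N → Phase N)
    (H : Phase N → ℝ) (x : Phase N) : Prop :=
  ∀ i : Idx N, f x i = ∑ j : Idx N, J x i j * pderiv j H x

/-- `Dφ(x)·J(x)·Dφ(x)ᵀ = J'(φ(x))`: `φ` is a Poisson map at `x` from the
structure matrix `J` to the structure matrix `J'`. -/
def PoissonMapAt {N : ℕ} [NeZero N] (φ : Phase N → Phase N) (J J' : SM N)
    (x : Phase N) : Prop :=
  ∀ i j : Idx N,
    (∑ k : Idx N, ∑ l : Idx N,
      pderiv k (fun y => φ y i) x * J x k l * pderiv l (fun y => φ y j) x)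
      = J' (φ x) i j

/-- `Dφ(x)·f(x) = g(φ(x))`: the vector field `f` is the pull-back of the vector
field `g` under `φ`, at the point `x`. -/
def PullbackAt {N : ℕ} [NeZero N] (φ : Phase N → Phase N)
    (f g : Phase N → Phase N) (x : Phase N) : Prop :=
  ∀ i : Idx N, (∑ k : Idx N, pderiv k (fun y => φ y i) x * f x k) = g (φ x) i

/-- The Toda lattice vector field: `ḃ_k = a_k - a_{k-1}`, `ȧ_k = a_k(b_{k+1} - b_k)`. -/
noncomputable def todaF {N : ℕ} (x : Phase N) : Phase N := fun i =>
  match i with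
  | Sum.inl k => c2 x k - c2 x (k - 1)
  | Sum.inr k => c2 x k * (c1 x (k + 1) - c1 x k)

/-- The modified Toda lattice vector field `MTL(ε)`:
`ṗ_k = (1 + εp_k)(q_k - q_{k-1})`, `q̇_k = q_k(p_{k+1} - p_k)`,
with coordinates `p_k = c1 x k`, `q_k = c2 x k`. -/
noncomputable def mtlF (ε : ℝ) {N : ℕ} (x : Phase N) : Phase N := fun i =>
  match i with
  | Sum.inl k => (1 + ε * c1 x k) * (c2 x k - c2 x (k - 1))
  | Sum.inr k => c2 x k * (c1 x (k + 1) - c1 x k)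

/-- Miura map `M₁(ε) : ℳ𝒯 → 𝒯`: `b_k = p_k + εq_{k-1}`, `a_k = q_k(1 + εp_k)`. -/
noncomputable def miuraMT1 (ε : ℝ) {N : ℕ} (x : Phase N) : Phase N := fun i =>
  match i with
  | Sum.inl k => c1 x k + ε * c2 x (k - 1)
  | Sum.inr k => c2 x k * (1 + ε * c1 x k)

/-- Miura map `M₂(ε) : ℳ𝒯 → 𝒯`: `b_k = p_k + εq_k`, `a_k = q_k(1 + εp_{k+1})`. -/
noncomputable def miuraMT2 (ε : ℝ) {N : ℕ} (x : Phase N) : Phase N := fun i =>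
  match i with
  | Sum.inl k => c1 x k + ε * c2 x k
  | Sum.inr k => c2 x k * (1 + ε * c1 x (k + 1))

/-! Since `pderiv k F x` is `DF(x)` applied to the `k`-th basis vector, the sum in `PullbackAt`
is the directional derivative `Dφᵢ(x)·f(x)`. Every component of a Miura map is either
`y_a + c y_b` or `y_a (1 + c y_b)`, whose directional derivatives are explicit, so each
component of the pull-back identity becomes a polynomial identity in the `p_k, q_k`. -/

theorem fderiv_coord_add_mul_apply {ι : Type*} [Fintype ι] (a b : ι) (c : ℝ) (x v : ι → ℝ) :
    fderiv ℝ (fun y : ι → ℝ => y a + c * y b) x v = v a + c * v b := by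
  have h : HasFDerivAt (fun y : ι → ℝ => y a + c * y b) _ x :=
    (hasFDerivAt_apply a x).add ((hasFDerivAt_apply (𝕜 := ℝ) b x).const_mul c)
  simp [h.fderiv]

theorem fderiv_coord_mul_one_add_mul_apply {ι : Type*} [Fintype ι] (a b : ι) (c : ℝ)
    (x v : ι → ℝ) :
    fderiv ℝ (fun y : ι → ℝ => y a * (1 + c * y b)) x v
      = v a * (1 + c * x b) + x a * (c * v b) := by
  have h : HasFDerivAt (fun y : ι → ℝ => y a * (1 + c * y b)) _ x :=
    (hasFDerivAt_apply a x).mul (((hasFDerivAt_apply (𝕜 := ℝ) b x).const_mul c).const_add 1)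
  simp only [h.fderiv, add_apply, smul_apply, ContinuousLinearMap.proj_apply, smul_eq_mul]
  ring

section Pullback

variable {N : ℕ} [NeZero N]

theorem sum_pderiv_mul_eq_fderiv (F : Phase N → ℝ) (x v : Phase N) :
    ∑ k : Idx N, pderiv k F x * v k = fderiv ℝ F x v := by
  rw [← ContinuousLinearMap.coe_coe, LinearMap.pi_apply_eq_sum_univ]
  simp only [pderiv, ContinuousLinearMap.coe_coe, smul_eq_mul, mul_comm]
  congr! with k - j
  simp [Pi.single_apply, eq_comm]

theorem pullbackAt_iff_fderiv {φ f g : Phase N → Phase N} {x : Phase N} :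
    PullbackAt φ f g x ↔ ∀ i, fderiv ℝ (fun y => φ y i) x (f x) = g (φ x) i := by
  simp only [PullbackAt, sum_pderiv_mul_eq_fderiv]

end Pullback

theorem stmt6_general (N : ℕ) [NeZero N] (ε : ℝ) :
    (∀ x : Phase N, PullbackAt (miuraMT1 ε) (mtlF ε) todaF x) ∧
    (∀ x : Phase N, PullbackAt (miuraMT2 ε) (mtlF ε) todaF x) := by
  refine ⟨fun x => pullbackAt_iff_fderiv.2 ?_, fun x => pullbackAt_iff_fderiv.2 ?_⟩ <;>
    rintro (k | k) <;>
    simp only [miuraMT1, miuraMT2, mtlF, todaF, c1, c2, fderiv_coord_add_mul_apply,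
      fderiv_coord_mul_one_add_mul_apply, sub_add_cancel, add_sub_cancel_right] <;>
    ring

/-- the pull-back of the Toda flow under either Miura map
`M₁(ε), M₂(ε)` coincides with the modified Toda lattice `MTL(ε)`. -/
theorem stmt6 (N : ℕ) [NeZero N] (hN : 5 ≤ N) (ε : ℝ) :
    (∀ x : Phase N, PullbackAt (miuraMT1 ε) (mtlF ε) todaF x) ∧
    (∀ x : Phase N, PullbackAt (miuraMT2 ε) (mtlF ε) todaF x) :=
  stmt6_general N ε
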